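/- Fix real α > 0 and integer j ≥ 1. If ω : 𝔻 → 𝔻 is analytic with ω(0) = 0, then for every analytic f : 𝔻 → ℂ one has the contractive subordination inequality ∫_𝔻 |f(ω(z))|² dv_{α,j}(z) ≤ ∫_𝔻 |f(z)|² dv_{α,j}(z). -/

import Mathlib

/-!
Littlewood's subordination principle on each circle `|z| = r`, followed by integration in polar
coordinates against the radial weight `v_{α,j}`.

For `r < ρ < 1`, the Poisson integral `u` of `‖f‖²` over the circle of radius `ρ` is the real part
of a holomorphic function and dominates the subharmonic function `‖f‖²` inside that circle. By the
Schwarz lemma `ω` maps the closed disc of radius `r` into the disc of radius `ρ`, so the mean of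
`‖f ∘ ω‖²` over `|z| = r` is at most the mean of `u ∘ ω`, which equals `u (ω 0) = u 0`, the mean
of `‖f‖²` over `|z| = ρ`. Letting `ρ → r` gives the inequality of circle means.
-/

open Filter MeasureTheory

/-- Iterated exponential: `e₀ = 1`, `e_{j+1} = exp (e_j)`. -/
noncomputable def iterExp : ℕ → ℝ
  | 0 => 1
  | j + 1 => Real.exp (iterExp j)

/-- The `j`-fold iterated logarithm: `log₀ x = x`, `log_{j+1} x = log (log_j x)`. -/
noncomputable def iterLog : ℕ → ℝ → ℝ
  | 0, x => x
  | j + 1, x => Real.log (iterLog j x)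

/-- Density of the measure `v_{α,j}` on the unit disk with respect to Lebesgue measure. -/
noncomputable def vDensity (α : ℝ) (j : ℕ) (z : ℂ) : ℝ :=
  if j = 1 then α * (1 - ‖z‖ ^ 2) ^ (α - 1)
  else α / (1 - ‖z‖ ^ 2) *
    (∏ ℓ ∈ Finset.Icc 1 (j - 2), iterLog ℓ (iterExp ℓ / (1 - ‖z‖ ^ 2)))⁻¹ *
    iterLog (j - 1) (iterExp (j - 1) / (1 - ‖z‖ ^ 2)) ^ (-(α + 1))

open Metric Set Real Complex ComplexConjugate Topology
open scoped ENNReal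

theorem poissonKernel_nonneg {c w z : ℂ} {R : ℝ} (hz : z ∈ sphere c R) (hw : w ∈ ball c R) :
    0 ≤ poissonKernel c w z := by
  rw [mem_sphere_iff_norm] at hz
  rw [mem_ball_iff_norm] at hw
  rw [poissonKernel_def, hz]
  have := norm_nonneg (w - c)
  exact div_nonneg (by nlinarith) (sq_nonneg _)

theorem poissonKernel_self {c z : ℂ} (hz : z ≠ c) : poissonKernel c c z = 1 := by
  simp [poissonKernel_def, sub_ne_zero.2 hz]

theorem circleIntegrable_poissonKernel_smul {E : Type*} [NormedAddCommGroup E] [NormedSpace ℝ E]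
    {f : ℂ → E} {c w : ℂ} {R : ℝ} (hf : ContinuousOn f (sphere c R)) (hw : w ∈ ball c R) :
    CircleIntegrable (poissonKernel c w • f) c R := by
  have hR : 0 < R := pos_of_mem_ball hw
  refine ContinuousOn.circleIntegrable hR.le (ContinuousOn.smul ?_ hf)
  rw [poissonKernel_eq_re_herglotzRieszKernel, ← abs_of_pos hR]
  exact continuous_re.comp_continuousOn (continuousOn_herglotzRieszKernel_sphere hw)

theorem norm_sq_le_circleAverage_poissonKernel_smul {f : ℂ → ℂ} {c w : ℂ} {R : ℝ}
    (hf : DiffContOnCl ℂ f (ball c R)) (hw : w ∈ ball c R) :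
    ‖f w‖ ^ 2 ≤ circleAverage (poissonKernel c w • fun z ↦ ‖f z‖ ^ 2) c R := by
  have hR : 0 < R := pos_of_mem_ball hw
  have hsphere : sphere c R ⊆ closure (ball c R) :=
    sphere_subset_closedBall.trans_eq (closure_ball c hR.ne').symm
  set a := f w
  -- `Re k ≤ ‖f‖²` because `‖f - a‖² ≥ 0`, with equality at `w`; apply the Poisson formula to `k`.
  set k : ℂ → ℂ := fun z ↦ 2 * (f z * conj a) - ((‖a‖ ^ 2 : ℝ) : ℂ)
  have hk : DiffContOnCl ℂ k (ball c R) :=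
    ((hf.smul_const (conj a)).const_smul (2 : ℂ)).sub_const _
  have hk_le : ∀ z, (k z).re ≤ ‖f z‖ ^ 2 := fun z ↦ by
    have := normSq_nonneg (f z - a)
    rw [normSq_sub, normSq_eq_norm_sq, normSq_eq_norm_sq] at this
    simp only [k, sub_re, ofReal_re, mul_re (2 : ℂ), re_ofNat, im_ofNat, zero_mul, sub_zero]
    linarith
  have hkw : (k w).re = ‖a‖ ^ 2 := by
    simp only [k, sub_re, ofReal_re, mul_re (2 : ℂ), re_ofNat, im_ofNat, zero_mul, sub_zero]
    rw [show f w = a from rfl, mul_conj, ofReal_re, normSq_eq_norm_sq]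
    ring
  have hfc : ContinuousOn f (sphere c R) := hf.continuousOn.mono hsphere
  calc ‖a‖ ^ 2 = (circleAverage (poissonKernel c w • k) c R).re := by
        rw [hk.circleAverage_poissonKernel_smul hw, hkw]
    _ = circleAverage (poissonKernel c w • fun z ↦ (k z).re) c R := by
        rw [← reCLM_apply, ← reCLM.circleAverage_comp_comm
          (circleIntegrable_poissonKernel_smul (hk.continuousOn.mono hsphere) hw)]
        congr 1
        ext z
        simp
    _ ≤ circleAverage (poissonKernel c w • fun z ↦ ‖f z‖ ^ 2) c R := by
        refine circleAverage_mono
          (circleIntegrable_poissonKernel_smul (continuous_re.comp_continuousOn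
            (hk.continuousOn.mono hsphere)) hw)
          (circleIntegrable_poissonKernel_smul (hfc.norm.pow 2) hw) fun z hz ↦ ?_
        rw [abs_of_pos hR] at hz
        exact mul_le_mul_of_nonneg_left (hk_le z) (poissonKernel_nonneg hz hw)

theorem circleAverage_norm_sq_comp_le {f ω : ℂ → ℂ} {r ρ : ℝ} (hr : 0 ≤ r)
    (hf : DiffContOnCl ℂ f (ball 0 ρ)) (hω : DifferentiableOn ℂ ω (closedBall 0 r))
    (hωm : MapsTo ω (closedBall 0 r) (ball 0 ρ)) (hω0 : ω 0 = 0) :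
    circleAverage (fun z ↦ ‖f (ω z)‖ ^ 2) 0 r ≤ circleAverage (fun z ↦ ‖f z‖ ^ 2) 0 ρ := by
  have hρ : 0 < ρ := pos_of_mem_ball (hωm (mem_closedBall_self hr))
  set g : ℂ → ℝ := fun z ↦ ‖f z‖ ^ 2
  have hfc : ContinuousOn f (closedBall 0 ρ) := closure_ball (0 : ℂ) hρ.ne' ▸ hf.continuousOn
  have hgc : ContinuousOn g (sphere 0 ρ) := (hfc.mono sphere_subset_closedBall).norm.pow 2
  set H : ℂ → ℂ := fun w ↦ circleAverage (fun ζ ↦ herglotzRieszKernel 0 w ζ • (g ζ : ℂ)) 0 ρ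
  have hH : DifferentiableOn ℂ H (ball 0 ρ) :=
    differentiableOn_circleAverage_herglotzRieszKernel_smul
      ((continuous_ofReal.comp_continuousOn hgc).circleIntegrable hρ.le)
  have hreH : ∀ w ∈ ball 0 ρ, (H w).re = circleAverage (poissonKernel 0 w • g) 0 ρ := fun w hw ↦ by
    rw [re_circleAverage_herglotzRieszKernel_smul (hgc.circleIntegrable hρ.le) hw,
      poissonKernel_eq_re_herglotzRieszKernel]
  have hHω : DifferentiableOn ℂ (H ∘ ω) (closedBall 0 r) := hH.comp hω hωm
  have hHωc : ContinuousOn (H ∘ ω) (sphere 0 r) := hHω.continuousOn.mono sphere_subset_closedBall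
  have hgω : ContinuousOn (fun z ↦ g (ω z)) (sphere 0 r) :=
    ((hfc.comp (hω.continuousOn.mono sphere_subset_closedBall) fun z hz ↦
      ball_subset_closedBall (hωm (sphere_subset_closedBall hz)))).norm.pow 2
  calc circleAverage (fun z ↦ g (ω z)) 0 r ≤ circleAverage (fun z ↦ (H (ω z)).re) 0 r := by
        refine circleAverage_mono (hgω.circleIntegrable hr)
          (continuous_re.comp_continuousOn hHωc |>.circleIntegrable hr) fun z hz ↦ ?_
        rw [abs_of_nonneg hr] at hz
        have hωz := hωm (sphere_subset_closedBall hz)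
        rw [hreH _ hωz]
        exact norm_sq_le_circleAverage_poissonKernel_smul hf hωz
    _ = (circleAverage (H ∘ ω) 0 r).re := by
        rw [← reCLM_apply, ← reCLM.circleAverage_comp_comm (hHωc.circleIntegrable hr)]
        rfl
    _ = (H 0).re := by
        rw [(hHω.diffContOnCl_ball (by rw [abs_of_nonneg hr])).circleAverage, Function.comp_apply,
          hω0]
    _ = circleAverage g 0 ρ := by
        rw [hreH 0 (mem_ball_self hρ)]
        refine circleAverage_congr_sphere fun z hz ↦ ?_
        have hz0 : z ≠ 0 := ne_of_mem_sphere hz (abs_pos.2 hρ.ne').ne'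
        simp [poissonKernel_self hz0]

theorem circleAverage_norm_sq_comp_le_of_mapsTo_unitBall {f ω : ℂ → ℂ}
    (hf : DifferentiableOn ℂ f (ball 0 1)) (hωa : DifferentiableOn ℂ ω (ball 0 1))
    (hωm : MapsTo ω (ball 0 1) (ball 0 1)) (hω0 : ω 0 = 0) {r : ℝ} (hr0 : 0 ≤ r) (hr1 : r < 1) :
    circleAverage (fun z ↦ ‖f (ω z)‖ ^ 2) 0 r ≤ circleAverage (fun z ↦ ‖f z‖ ^ 2) 0 r := by
  have hcont : ContinuousOn (circleAverage (fun z ↦ ‖f z‖ ^ 2) 0) (Ico 0 1) :=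
    ContinuousOn.circleAverage ((hf.continuousOn.norm.pow 2).mono fun z hz ↦ by simpa using hz.2)
      fun _ hs ↦ hs.1
  have hlim : Tendsto (circleAverage (fun z ↦ ‖f z‖ ^ 2) 0) (𝓝[>] r)
      (𝓝 (circleAverage (fun z ↦ ‖f z‖ ^ 2) 0 r)) :=
    (hcont r ⟨hr0, hr1⟩).mono_of_mem_nhdsWithin
      (mem_of_superset (Ioo_mem_nhdsGT hr1) fun s hs ↦ ⟨hr0.trans hs.1.le, hs.2⟩)
  refine ge_of_tendsto hlim ?_
  filter_upwards [Ioo_mem_nhdsGT hr1] with ρ ⟨hrρ, hρ1⟩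
  refine circleAverage_norm_sq_comp_le hr0 (hf.diffContOnCl_ball (closedBall_subset_ball hρ1))
    (hωa.mono (closedBall_subset_ball hr1)) (fun z hz ↦ ?_) hω0
  rw [mem_closedBall_zero_iff] at hz
  have hschwarz : ‖ω z‖ ≤ ‖z‖ := Complex.norm_le_norm_of_mapsTo_ball hωa
    (hωm.mono_right ball_subset_closedBall) hω0 (hz.trans_lt hr1)
  exact mem_ball_zero_iff.2 (by linarith)

theorem lintegral_ofReal_circleMap {F : ℂ → ℝ} {r : ℝ} (hr : 0 ≤ r)
    (hF : ContinuousOn F (sphere 0 r)) (hF0 : ∀ z ∈ sphere 0 r, 0 ≤ F z) :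
    ∫⁻ θ in Ioo (-π) π, ENNReal.ofReal (F (circleMap 0 r θ))
      = ENNReal.ofReal (2 * π * circleAverage F 0 r) := by
  have hmem : ∀ θ, circleMap 0 r θ ∈ sphere 0 r := circleMap_mem_sphere 0 hr
  have hcont : Continuous fun θ ↦ F (circleMap 0 r θ) :=
    hF.comp_continuous (continuous_circleMap 0 r) hmem
  have havg : 2 * π * circleAverage F 0 r = ∫ θ in (-π)..π, F (circleMap 0 r θ) := by
    rw [circleAverage_eq_integral_add (-π), smul_eq_mul, ← mul_assoc,
      mul_inv_cancel₀ two_pi_pos.ne', one_mul,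
      intervalIntegral.integral_comp_add_right (fun θ ↦ F (circleMap 0 r θ))]
    ring_nf
  rw [havg, intervalIntegral.integral_of_le (by linarith [pi_pos]), integral_Ioc_eq_integral_Ioo,
    ofReal_integral_eq_lintegral_ofReal]
  · exact hcont.integrableOn_Icc.mono_set Ioo_subset_Icc_self
  · exact ae_of_all _ fun θ ↦ hF0 _ (hmem θ)

theorem lintegral_ball_eq_lintegral_polar (R : ℝ) (G : ℂ → ℝ≥0∞) :
    ∫⁻ z in ball (0 : ℂ) R, G z
      = ∫⁻ p in Ioo 0 R ×ˢ Ioo (-π) π, ENNReal.ofReal p.1 * G (circleMap 0 p.1 p.2) := by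
  set s : Set (ℝ × ℝ) := Ioo 0 R ×ˢ Ioo (-π) π
  have hs : MeasurableSet s := measurableSet_Ioo.prod measurableSet_Ioo
  have hsT : s ⊆ polarCoord.target := fun p hp ↦ ⟨hp.1.1, hp.2⟩
  rw [← lintegral_indicator measurableSet_ball, ← Complex.lintegral_comp_polarCoord_symm,
    ← inter_eq_left.2 hsT, ← Measure.restrict_restrict hs, ← lintegral_indicator hs]
  refine setLIntegral_congr_fun polarCoord.open_target.measurableSet ?_
  rintro ⟨r, θ⟩ ⟨hr : 0 < r, hθ⟩
  beta_reduce
  have hsymm : Complex.polarCoord.symm (r, θ) = circleMap 0 r θ := by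
    simp [circleMap, Complex.exp_mul_I]
  have hnorm : ‖circleMap 0 r θ‖ = r := by simp [abs_of_pos hr]
  by_cases hrR : r < R
  · rw [hsymm, indicator_of_mem (by simpa [hnorm] using hrR),
      indicator_of_mem (show (r, θ) ∈ s from ⟨⟨hr, hrR⟩, hθ⟩), smul_eq_mul]
  · rw [hsymm, indicator_of_notMem (by simpa [hnorm] using hrR),
      indicator_of_notMem (show (r, θ) ∉ s from fun h ↦ hrR h.1.2), smul_zero]

theorem lintegral_ball_radial_mul {R : ℝ} {W : ℝ → ℝ≥0∞} (hW : Measurable W) {F : ℂ → ℝ}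
    (hF : ContinuousOn F (ball 0 R)) (hF0 : ∀ z, 0 ≤ F z) :
    ∫⁻ z in ball (0 : ℂ) R, W ‖z‖ * ENNReal.ofReal (F z)
      = ∫⁻ r in Ioo 0 R, ENNReal.ofReal r * W r * ENNReal.ofReal (2 * π * circleAverage F 0 r) := by
  have hs : MeasurableSet (Ioo 0 R ×ˢ Ioo (-π) π) := measurableSet_Ioo.prod measurableSet_Ioo
  have hmeas : AEMeasurable (fun p : ℝ × ℝ ↦
      ENNReal.ofReal p.1 * W p.1 * ENNReal.ofReal (F (circleMap 0 p.1 p.2)))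
      ((volume.restrict (Ioo 0 R)).prod (volume.restrict (Ioo (-π) π))) := by
    rw [Measure.prod_restrict, ← Measure.volume_eq_prod]
    refine (by fun_prop : Measurable fun p : ℝ × ℝ ↦ ENNReal.ofReal p.1 * W p.1).aemeasurable.mul ?_
    refine ContinuousOn.aemeasurable (ENNReal.continuous_ofReal.comp_continuousOn ?_) hs
    refine hF.comp (by fun_prop) fun p hp ↦ ?_
    simpa [abs_of_pos hp.1.1] using hp.1.2
  calc ∫⁻ z in ball (0 : ℂ) R, W ‖z‖ * ENNReal.ofReal (F z)
      = ∫⁻ p in Ioo 0 R ×ˢ Ioo (-π) π,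
          ENNReal.ofReal p.1 * W p.1 * ENNReal.ofReal (F (circleMap 0 p.1 p.2)) := by
        rw [lintegral_ball_eq_lintegral_polar]
        refine setLIntegral_congr_fun hs fun p hp ↦ ?_
        rw [norm_circleMap_zero, abs_of_pos hp.1.1, mul_assoc]
    _ = ∫⁻ r in Ioo 0 R, ∫⁻ θ in Ioo (-π) π,
          ENNReal.ofReal r * W r * ENNReal.ofReal (F (circleMap 0 r θ)) := by
        rw [Measure.volume_eq_prod, ← Measure.prod_restrict]
        exact lintegral_prod _ hmeas
    _ = ∫⁻ r in Ioo 0 R, ENNReal.ofReal r * W r * ENNReal.ofReal (2 * π * circleAverage F 0 r) := by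
        refine setLIntegral_congr_fun measurableSet_Ioo fun r ⟨hr, hrR⟩ ↦ ?_
        have hcont : Continuous fun θ ↦ F (circleMap 0 r θ) :=
          hF.comp_continuous (continuous_circleMap 0 r) fun θ ↦ by simpa [abs_of_pos hr] using hrR
        rw [lintegral_const_mul'' _ hcont.measurable.ennreal_ofReal.aemeasurable,
          lintegral_ofReal_circleMap hr.le (hF.mono (sphere_subset_ball hrR)) fun z _ ↦ hF0 z]

@[fun_prop]
theorem measurable_iterLog (ℓ : ℕ) : Measurable (iterLog ℓ) := by
  induction ℓ with
  | zero => exact measurable_id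
  | succ ℓ ih => exact Real.measurable_log.comp ih

@[fun_prop]
theorem measurable_vDensity (α : ℝ) (j : ℕ) : Measurable (vDensity α j) := by
  unfold vDensity
  split_ifs <;> fun_prop

theorem vDensity_ofReal_norm (α : ℝ) (j : ℕ) (z : ℂ) : vDensity α j ‖z‖ = vDensity α j z := by
  simp [vDensity]

theorem lintegral_norm_sq_mul_vDensity (α : ℝ) (j : ℕ) {g : ℂ → ℂ}
    (hg : ContinuousOn g (ball 0 1)) :
    ∫⁻ z in ball (0 : ℂ) 1, ENNReal.ofReal (‖g z‖ ^ 2 * vDensity α j z)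
      = ∫⁻ r in Ioo 0 1, ENNReal.ofReal r * ENNReal.ofReal (vDensity α j r)
          * ENNReal.ofReal (2 * π * circleAverage (fun z ↦ ‖g z‖ ^ 2) 0 r) := by
  rw [← lintegral_ball_radial_mul (W := fun r ↦ ENNReal.ofReal (vDensity α j r))
    (F := fun z ↦ ‖g z‖ ^ 2) (by fun_prop) (hg.norm.pow 2) fun z ↦ sq_nonneg _]
  refine lintegral_congr fun z ↦ ?_
  rw [ENNReal.ofReal_mul (sq_nonneg _), mul_comm, vDensity_ofReal_norm]

theorem contractive_subordination_general (α : ℝ) (j : ℕ)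
    (ω : ℂ → ℂ)
    (hωa : DifferentiableOn ℂ ω (Metric.ball (0 : ℂ) 1))
    (hωm : Set.MapsTo ω (Metric.ball (0 : ℂ) 1) (Metric.ball (0 : ℂ) 1))
    (hω0 : ω 0 = 0) :
    ∀ f : ℂ → ℂ, DifferentiableOn ℂ f (Metric.ball (0 : ℂ) 1) →
      (∫⁻ z in Metric.ball (0 : ℂ) 1, ENNReal.ofReal (‖f (ω z)‖ ^ 2 * vDensity α j z))
        ≤ ∫⁻ z in Metric.ball (0 : ℂ) 1, ENNReal.ofReal (‖f z‖ ^ 2 * vDensity α j z) := by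
  intro f hf
  rw [lintegral_norm_sq_mul_vDensity α j (g := fun z ↦ f (ω z))
      (hf.continuousOn.comp hωa.continuousOn hωm),
    lintegral_norm_sq_mul_vDensity α j hf.continuousOn]
  refine setLIntegral_mono' measurableSet_Ioo fun r hr ↦ ?_
  gcongr _ * ENNReal.ofReal (2 * π * ?_)
  exact circleAverage_norm_sq_comp_le_of_mapsTo_unitBall hf hωa hωm hω0 hr.1.le hr.2

/-- Contractive subordination in `D_{α,j}(𝔻)`: if `ω : 𝔻 → 𝔻` is analytic with `ω(0) = 0`,
then `∫_𝔻 |f ∘ ω|² dv_{α,j} ≤ ∫_𝔻 |f|² dv_{α,j}` for every analytic `f`. -/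
theorem contractive_subordination (α : ℝ) (hα : 0 < α) (j : ℕ) (hj : 1 ≤ j)
    (ω : ℂ → ℂ)
    (hωa : DifferentiableOn ℂ ω (Metric.ball (0 : ℂ) 1))
    (hωm : Set.MapsTo ω (Metric.ball (0 : ℂ) 1) (Metric.ball (0 : ℂ) 1))
    (hω0 : ω 0 = 0) :
    ∀ f : ℂ → ℂ, DifferentiableOn ℂ f (Metric.ball (0 : ℂ) 1) →
      (∫⁻ z in Metric.ball (0 : ℂ) 1, ENNReal.ofReal (‖f (ω z)‖ ^ 2 * vDensity α j z))
        ≤ ∫⁻ z in Metric.ball (0 : ℂ) 1, ENNReal.ofReal (‖f z‖ ^ 2 * vDensity α j z) :=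
  contractive_subordination_general α j ω hωa hωm hω0
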